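/- The attacked system Sa/Ga is AE-robust recoverable with respect to G_robust if and only if, for every detection state x_d ∈ X_det, the post-attack state (A, x_d) belongs to the state set of the maximally permissive supervisor S^R for G^R that is safe with respect to the resilient specification Ha and nonblocking. Consequently, synthesizing S^R simultaneously solves the verification of AE-robust recoverability and the synthesis of robust-recovery strategies. -/

import Mathlib

/-!
Common formalization of supervisory control of DES under actuator-enablement
attacks, following the natural-language context.

* A plant is a DFA with partial transition function `f : X → E → Option X`
  and initial state `x0`; `runFrom` extends `f` to strings; `Lang f x0` is the
  generated language.
* A strict subautomaton of an automaton is represented by its state set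
  `Q : Set X`, with induced transition function `subStep f Q`.
* Attacked events are modelled by the alphabet `E ⊕ E`: `Sum.inl e` is the
  ordinary event `e`, `Sum.inr e` is the attacked copy `eᵃ` (meaningful for
  `e ∈ Scv`).
* The attacked plant `gaStep`, attacked supervisor `saStep` (state `none`
  playing the role of the fresh state `A`), and their synchronous composition
  `grStep` (the attacked closed-loop system `G^R = Sa ∥ Ga`) are defined below,
  together with detection states, robust-recovery, the resilient specification
  `Ha`, supervisors for `G^R`, and resilience.
-/

open Classical List

namespace RobustRec

variable {X : Type*} {E : Type*}

/-- Extension of a partial transition function to strings. -/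
def runFrom (f : X → E → Option X) : X → List E → Option X
  | x, [] => some x
  | x, e :: w => (f x e).bind fun y => runFrom f y w

/-- Language generated from state `x0`. -/
def Lang (f : X → E → Option X) (x0 : X) : Set (List E) :=
  {w | (runFrom f x0 w).isSome}

/-- Transition function of the strict (induced) subautomaton with state set `Q`:
a transition is defined iff it is defined in the big automaton and both its
endpoints lie in `Q`. -/
noncomputable def subStep (f : X → E → Option X) (Q : Set X) : X → E → Option X :=
  fun x e => (f x e).bind fun y => if x ∈ Q ∧ y ∈ Q then some y else none

/-- Vulnerable states: those where some vulnerable controllable event is feasible. -/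
def vulnStates (f : X → E → Option X) (Scv : Set E) : Set X :=
  {x | ∃ e ∈ Scv, (f x e).isSome}

/-- A supervisor for the plant `(f, x0)`, represented by its state set `XS`
(the induced strict subautomaton): it contains `x0`, is controllable w.r.t.
the uncontrollable events `Suc`, and is safe w.r.t. the unsafe states `XUS`. -/
structure IsSupervisor (f : X → E → Option X) (x0 : X) (Suc : Set E)
    (XUS : Set X) (XS : Set X) : Prop where
  init_mem : x0 ∈ XS
  controllable : ∀ x ∈ XS, ∀ e ∈ Suc, ∀ y, f x e = some y → y ∈ XS
  safe : ∀ x ∈ XS, x ∉ XUS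

/-- The attacked plant `Ga`: all transitions of `G`, plus, for every transition
on a vulnerable event `σ ∈ Scv`, a parallel transition on its attacked copy. -/
noncomputable def gaStep (f : X → E → Option X) (Scv : Set E) :
    X → E ⊕ E → Option X
  | x, Sum.inl e => f x e
  | x, Sum.inr e => if e ∈ Scv then f x e else none

/-- The attacked supervisor `Sa`: states are `some x` for states `x` of `S`
plus the fresh state `A = none` with a self-loop on every event; for every
state `x` of `S` and `σ ∈ Scv` with `f_S(x,σ)` undefined there is a transition
on `σᵃ` from `x` to `A`. -/
noncomputable def saStep (f : X → E → Option X) (XS : Set X) (Scv : Set E) :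
    Option X → E ⊕ E → Option (Option X)
  | none, _ => some none
  | some x, Sum.inl e => (subStep f XS x e).map some
  | some x, Sum.inr e =>
      if e ∈ Scv ∧ x ∈ XS ∧ subStep f XS x e = none then some none else none

/-- Synchronous composition of two automata over a common alphabet. -/
def prodStep {X1 X2 A : Type*} (f1 : X1 → A → Option X1) (f2 : X2 → A → Option X2) :
    X1 × X2 → A → Option (X1 × X2) :=
  fun p a => (f1 p.1 a).bind fun y1 => (f2 p.2 a).map fun y2 => (y1, y2)

/-- The attacked closed-loop system `G^R = Sa ∥ Ga`. Its post-attack states are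
those of the form `(none, x)`, i.e. `(A, x)`. -/
noncomputable def grStep (f : X → E → Option X) (XS : Set X) (Scv : Set E) :
    Option X × X → E ⊕ E → Option (Option X × X) :=
  prodStep (saStep f XS Scv) (gaStep f Scv)

/-- Initial state of `G^R`. -/
def grInit (x0 : X) : Option X × X := (some x0, x0)

/-- Embedding of strings over `Σ` into strings over `Σ ∪ Σᵃ_{c,v}`. -/
def embed : List E → List (E ⊕ E) := List.map Sum.inl

/-- The language `L(Sa/Ga)` of the attacked closed-loop system. -/
noncomputable def GRLang (f : X → E → Option X) (x0 : X) (XS : Set X) (Scv : Set E) :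
    Set (List (E ⊕ E)) :=
  Lang (grStep f XS Scv) (grInit x0)

/-- The detection language `L_det = {sσ ∈ L(G) | s ∈ L(S/G), σ ∈ Σ_{c,v},
sσᵃ ∈ L(Sa/Ga)}`. -/
noncomputable def detLang (f : X → E → Option X) (x0 : X) (XS : Set X) (Scv : Set E) :
    Set (List E) :=
  {w | ∃ s σ, w = s ++ [σ] ∧ σ ∈ Scv ∧ w ∈ Lang f x0 ∧
        s ∈ Lang (subStep f XS) x0 ∧ embed s ++ [Sum.inr σ] ∈ GRLang f x0 XS Scv}

/-- The detection states `X_det = {f(x0, sσ) : sσ ∈ L_det}`. -/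
noncomputable def detStates (f : X → E → Option X) (x0 : X) (XS : Set X) (Scv : Set E) :
    Set X :=
  {x | ∃ w ∈ detLang f x0 XS Scv, runFrom f x0 w = some x}

/-- `r` is a robust-recovery strategy from `x` relative to the candidate set `R`
of recoverable states, the robust region `XR` and the bad states
`Bad = X_v ∪ X_US`: (1) `r` leads into `XR`; (2) no prefix of `r` visits `Bad`;
(3) no prefix of `r` can uncontrollably reach `Bad`; (4) any one-step
uncontrollable deviation from `r` lands in `R`. -/
def IsRecoveryPath (f : X → E → Option X) (Suc : Set E) (XR Bad : Set X)
    (R : Set X) (x : X) (r : List E) : Prop :=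
  (∃ y ∈ XR, runFrom f x r = some y) ∧
  (∀ t, t <+: r → ∀ y, runFrom f x t = some y → y ∉ Bad) ∧
  (∀ t, t <+: r → ∀ u : List E, (∀ e ∈ u, e ∈ Suc) →
      ∀ y, runFrom f x (t ++ u) = some y → y ∉ Bad) ∧
  (∀ t, t <+: r → ∀ e ∈ Suc, ∀ y, runFrom f x (t ++ [e]) = some y →
      ¬ (t ++ [e]) <+: r → y ∈ R)

/-- The set `R` of AE-robust recoverable states: the largest subset of
`X \ Bad` each of whose elements admits a robust-recovery strategy (relative
to the set itself). -/
def recSet (f : X → E → Option X) (Suc : Set E) (XR Bad : Set X) : Set X :=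
  ⋃₀ {R | R ⊆ Badᶜ ∧ ∀ x ∈ R, ∃ r, IsRecoveryPath f Suc XR Bad R x r}

/-- The attacked system `Sa/Ga` is AE-robust recoverable w.r.t. the robust
region `XR` if every detection state is AE-robust recoverable. -/
noncomputable def AERobustRecoverable (f : X → E → Option X) (x0 : X)
    (Suc Scv : Set E) (XUS XS XR : Set X) : Prop :=
  detStates f x0 XS Scv ⊆ recSet f Suc XR (vulnStates f Scv ∪ XUS)

/-- Reachable states of `G^R` (the state set of the synchronous composition). -/
noncomputable def grStates (f : X → E → Option X) (x0 : X) (XS : Set X) (Scv : Set E) :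
    Set (Option X × X) :=
  {p | ∃ w, runFrom (grStep f XS Scv) (grInit x0) w = some p}

/-- A supervisor for `G^R`, represented by its state set `Q` (inducing a strict
subautomaton of `G^R`): it contains the initial state and is controllable
w.r.t. `Suc` (attacked events being controllable). -/
structure IsGRSupervisor (f : X → E → Option X) (x0 : X) (Suc Scv : Set E)
    (XS : Set X) (Q : Set (Option X × X)) : Prop where
  subset : Q ⊆ grStates f x0 XS Scv
  init_mem : grInit x0 ∈ Q
  controllable : ∀ p ∈ Q, ∀ e ∈ Suc, ∀ q, grStep f XS Scv p (Sum.inl e) = some q → q ∈ Q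

/-- State set of the resilient specification `Ha`: `G^R` minus every post-attack
state `(A, x)` with `x ∈ X_v ∪ X_US`. -/
def haCarrier (f : X → E → Option X) (Scv : Set E) (XUS : Set X) :
    Set (Option X × X) :=
  {p | ¬ (p.1 = none ∧ p.2 ∈ vulnStates f Scv ∪ XUS)}

/-- Marked states of `Ha`: post-attack states `(A, x)` with `x` in the robust
region. -/
def haMarked (XR : Set X) : Set (Option X × X) :=
  {p | p.1 = (none : Option X) ∧ p.2 ∈ XR}

/-- The closed-loop language `L(S^R/G^R) = L(S^R)` of a supervisor `Q` for `G^R`. -/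
noncomputable def SRLang (f : X → E → Option X) (x0 : X) (XS : Set X) (Scv : Set E)
    (Q : Set (Option X × X)) : Set (List (E ⊕ E)) :=
  Lang (subStep (grStep f XS Scv) Q) (grInit x0)

/-- `S^R` is safe w.r.t. the resilient specification `Ha`: `L(S^R) ⊆ L(Ha)`. -/
noncomputable def SafeWrtHa (f : X → E → Option X) (x0 : X) (XS : Set X)
    (Scv : Set E) (XUS : Set X) (Q : Set (Option X × X)) : Prop :=
  SRLang f x0 XS Scv Q ⊆
    Lang (subStep (grStep f XS Scv) (haCarrier f Scv XUS)) (grInit x0)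

/-- `S^R` is nonblocking: from every post-attack state of `S^R`, a marked state
of `Ha` is reachable within `S^R`. -/
noncomputable def NonblockingSR (f : X → E → Option X) (XS : Set X) (Scv : Set E)
    (XR : Set X) (Q : Set (Option X × X)) : Prop :=
  ∀ p ∈ Q, p.1 = (none : Option X) →
    ∃ w q, runFrom (subStep (grStep f XS Scv) Q) p w = some q ∧ q ∈ haMarked XR

/-- `S^R` is maximally permissive among safe nonblocking supervisors for `G^R`. -/
noncomputable def MaxPermissive (f : X → E → Option X) (x0 : X) (Suc Scv : Set E)
    (XS XUS XR : Set X) (Q : Set (Option X × X)) : Prop :=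
  ∀ Q', IsGRSupervisor f x0 Suc Scv XS Q' → SafeWrtHa f x0 XS Scv XUS Q' →
    NonblockingSR f XS Scv XR Q' → SRLang f x0 XS Scv Q' ⊆ SRLang f x0 XS Scv Q

/-- `S^R` (given by its state set `Q`) is resilient w.r.t. `Scv` and the robust
region `XR`: it permits the full nominal behavior `L(S/G)`, and after any
AE-attack `sσᵃ` feasible in `L(Sa/Ga)` it permits the attack, keeps all its
subsequent behavior out of `Bad = X_v ∪ X_US`, and can always be extended
within `L(S^R)` to reach a post-attack state `(A, x)` with `x ∈ XR`; i.e. it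
enforces a robust-recovery strategy from the detection state. -/
noncomputable def ResilientSup (f : X → E → Option X) (x0 : X) (Scv : Set E)
    (XS XR Bad : Set X) (Q : Set (Option X × X)) : Prop :=
  (∀ s ∈ Lang (subStep f XS) x0, embed s ∈ SRLang f x0 XS Scv Q) ∧
  ∀ s : List E, embed s ∈ SRLang f x0 XS Scv Q →
    ∀ σ ∈ Scv, embed s ++ [Sum.inr σ] ∈ GRLang f x0 XS Scv →
      embed s ++ [Sum.inr σ] ∈ SRLang f x0 XS Scv Q ∧
      ∀ t : List E, embed s ++ [Sum.inr σ] ++ embed t ∈ SRLang f x0 XS Scv Q →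
        (∀ t', t' <+: t → ∀ y, runFrom f x0 (s ++ σ :: t') = some y →
            y ∉ Bad) ∧
        ∃ u q, runFrom (subStep (grStep f XS Scv) Q) (grInit x0)
                 (embed s ++ [Sum.inr σ] ++ embed t ++ u) = some q ∧
               q.1 = (none : Option X) ∧ q.2 ∈ XR

/-- A prefix-closed language. -/
def PrefixClosed (K : Set (List E)) : Prop := ∀ s t : List E, s ++ t ∈ K → s ∈ K

/-- `K` is controllable w.r.t. the language `M` and uncontrollable events `Suc`. -/
def ControllableLang (K M : Set (List E)) (Suc : Set E) : Prop :=
  ∀ s ∈ K, ∀ e ∈ Suc, s ++ [e] ∈ M → s ++ [e] ∈ K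

/-- The supremal controllable (prefix-closed) sublanguage of `M` w.r.t. `LG`. -/
def supC (M LG : Set (List E)) (Suc : Set E) : Set (List E) :=
  ⋃₀ {K | K ⊆ M ∧ PrefixClosed K ∧ ControllableLang K LG Suc}

end RobustRec

/-!
AE-robust recoverability has an invariant characterisation: `recSet` is the largest set of safe
states that is closed under uncontrollable events and from each of whose states the robust region
can be reached without leaving the set (`IsRecoveryClosed`).

If every detection state is recoverable, the supervisor for `G^R` admitting all reachable
pre-attack states and the reachable post-attack states `(A, x)` with `x ∈ recSet` is safe and
nonblocking; by maximal permissiveness its runs, in particular the attacks leading into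
`(A, x_d)`, are runs of `S^R`. Conversely, the plant states `x` with `(A, x)` reachable in `S^R`
form a recovery-closed set: safety of `S^R` keeps them out of `X_v ∪ X_US`, controllability closes
them under uncontrollable events, and nonblocking supplies the recovery. Since `S^R` admits all
nominal behaviour (again by maximal permissiveness), this set contains every detection state.
-/

namespace RobustRec

section Automata

variable {X E Y B : Type*}

@[simp]
theorem runFrom_nil (f : X → E → Option X) (x : X) : runFrom f x [] = some x := rfl

@[simp]
theorem runFrom_cons (f : X → E → Option X) (x : X) (e : E) (w : List E) :
    runFrom f x (e :: w) = (f x e).bind fun y => runFrom f y w := rfl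

theorem runFrom_append (f : X → E → Option X) (x : X) (s t : List E) :
    runFrom f x (s ++ t) = (runFrom f x s).bind fun y => runFrom f y t := by
  induction s generalizing x with
  | nil => rfl
  | cons e s ih => simp [ih, Option.bind_assoc]

theorem runFrom_concat (f : X → E → Option X) (x : X) (w : List E) (e : E) :
    runFrom f x (w ++ [e]) = (runFrom f x w).bind fun y => f y e := by
  simp [runFrom_append]

theorem runFrom_append_eq_some_iff {f : X → E → Option X} {x z : X} {s t : List E} :
    runFrom f x (s ++ t) = some z ↔ ∃ y, runFrom f x s = some y ∧ runFrom f y t = some z := by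
  rw [runFrom_append, Option.bind_eq_some_iff]

theorem subStep_eq_some_iff {f : X → E → Option X} {Q : Set X} {x y : X} {e : E} :
    subStep f Q x e = some y ↔ f x e = some y ∧ x ∈ Q ∧ y ∈ Q := by
  simp only [subStep, Option.bind_eq_some_iff, Option.ite_none_right_eq_some, Option.some.injEq]
  constructor
  · rintro ⟨z, hz, hQ, rfl⟩
    exact ⟨hz, hQ⟩
  · rintro ⟨hy, hQ⟩
    exact ⟨y, hy, hQ, rfl⟩

theorem mem_of_runFrom {f : X → E → Option X} {S : Set X} {A : Set E}
    (hS : ∀ x ∈ S, ∀ e ∈ A, ∀ y, f x e = some y → y ∈ S)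
    {x y : X} {w : List E} (hw : ∀ e ∈ w, e ∈ A) (hx : x ∈ S)
    (h : runFrom f x w = some y) : y ∈ S := by
  induction w generalizing x with
  | nil => exact Option.some.inj h ▸ hx
  | cons e w ih =>
    obtain ⟨z, hz, h⟩ := Option.bind_eq_some_iff.mp h
    exact ih (fun a ha => hw a (List.mem_cons_of_mem e ha))
      (hS x hx e (hw e List.mem_cons_self) z hz) h

theorem runFrom_map_of_step {g : Y → B → Option Y} {f : X → E → Option X} {S : Set Y}
    (φ : Y → X) (ψ : B → E)
    (hstep : ∀ y ∈ S, ∀ b y', g y b = some y' → y' ∈ S ∧ f (φ y) (ψ b) = some (φ y'))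
    {y y' : Y} {w : List B} (hy : y ∈ S) (h : runFrom g y w = some y') :
    y' ∈ S ∧ runFrom f (φ y) (w.map ψ) = some (φ y') := by
  induction w generalizing y with
  | nil => exact Option.some.inj h ▸ ⟨hy, rfl⟩
  | cons b w ih =>
    obtain ⟨z, hz, h⟩ := Option.bind_eq_some_iff.mp h
    obtain ⟨hzS, hfz⟩ := hstep y hy b z hz
    obtain ⟨hy'S, hrun⟩ := ih hzS h
    exact ⟨hy'S, by simp [hfz, hrun]⟩

theorem runFrom_map_of_forall_step {g : Y → B → Option Y} {f : X → E → Option X}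
    (φ : Y → X) (ψ : B → E) (hstep : ∀ y b y', g y b = some y' → f (φ y) (ψ b) = some (φ y'))
    {y y' : Y} {w : List B} (h : runFrom g y w = some y') :
    runFrom f (φ y) (w.map ψ) = some (φ y') :=
  (runFrom_map_of_step (S := Set.univ) φ ψ
    (fun y _ b y' hy => ⟨trivial, hstep y b y' hy⟩) trivial h).2

theorem runFrom_of_runFrom_subStep {f : X → E → Option X} {Q : Set X} {x y : X} {w : List E}
    (h : runFrom (subStep f Q) x w = some y) : runFrom f x w = some y := by
  simpa using runFrom_map_of_forall_step id id (fun _ _ _ h => (subStep_eq_some_iff.mp h).1) h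

theorem mem_of_runFrom_subStep {f : X → E → Option X} {Q : Set X} {x y : X} {w : List E}
    (hx : x ∈ Q) (h : runFrom (subStep f Q) x w = some y) : y ∈ Q :=
  mem_of_runFrom (A := Set.univ) (fun _ _ _ _ _ h => (subStep_eq_some_iff.mp h).2.2)
    (fun _ _ => trivial) hx h

theorem runFrom_subStep_concat {f : X → E → Option X} {Q : Set X} {x y z : X} {w : List E}
    {e : E} (hx : x ∈ Q) (hw : runFrom (subStep f Q) x w = some y) (he : f y e = some z)
    (hz : z ∈ Q) : runFrom (subStep f Q) x (w ++ [e]) = some z := by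
  rw [runFrom_concat, hw, Option.bind_some, subStep_eq_some_iff]
  exact ⟨he, mem_of_runFrom_subStep hx hw, hz⟩

theorem runFrom_subStep_eq_of_mem_lang {f : X → E → Option X} {Q : Set X} {x y : X}
    {w : List E} (hw : w ∈ Lang (subStep f Q) x) (h : runFrom f x w = some y) :
    runFrom (subStep f Q) x w = some y := by
  obtain ⟨y', hy'⟩ := Option.isSome_iff_exists.mp hw
  obtain rfl : y' = y := Option.some.inj ((runFrom_of_runFrom_subStep hy').symm.trans h)
  exact hy'

theorem lang_subStep_mono {f : X → E → Option X} {Q Q' : Set X} (hQ : Q ⊆ Q') (x : X) :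
    Lang (subStep f Q) x ⊆ Lang (subStep f Q') x := by
  intro w hw
  obtain ⟨y, hy⟩ := Option.isSome_iff_exists.mp hw
  refine Option.isSome_iff_exists.mpr ⟨y, ?_⟩
  simpa using runFrom_map_of_forall_step (f := subStep f Q') id id (fun _ _ _ hstep => by
    obtain ⟨hf, hx, hx'⟩ := subStep_eq_some_iff.mp hstep
    exact subStep_eq_some_iff.mpr ⟨hf, hQ hx, hQ hx'⟩) hy

end Automata

section AttackedSystem

variable {X E : Type*} {f : X → E → Option X} {x0 : X} {XS : Set X} {Scv : Set E}

theorem prodStep_eq_some_iff {X1 X2 A : Type*} {f1 : X1 → A → Option X1}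
    {f2 : X2 → A → Option X2} {p q : X1 × X2} {a : A} :
    prodStep f1 f2 p a = some q ↔ f1 p.1 a = some q.1 ∧ f2 p.2 a = some q.2 := by
  obtain ⟨q1, q2⟩ := q
  simp [prodStep, Option.bind_eq_some_iff, Option.map_eq_some_iff]

theorem gaStep_eq_some {x y : X} {a : E ⊕ E} (h : gaStep f Scv x a = some y) :
    f x (Sum.elim id id a) = some y := by
  cases a with
  | inl e => exact h
  | inr e =>
    simp only [gaStep, Option.ite_none_right_eq_some] at h
    exact h.2

theorem grStep_snd {p q : Option X × X} {a : E ⊕ E} (h : grStep f XS Scv p a = some q) :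
    f p.2 (Sum.elim id id a) = some q.2 :=
  gaStep_eq_some (prodStep_eq_some_iff.mp h).2

theorem grStep_none_inl {x y : X} {e : E} :
    grStep f XS Scv (none, x) (Sum.inl e) = some (none, y) ↔ f x e = some y := by
  simp [grStep, prodStep_eq_some_iff, saStep, gaStep]

theorem grStep_some_inl {x y : X} {e : E} (h : subStep f XS x e = some y) :
    grStep f XS Scv (some x, x) (Sum.inl e) = some (some y, y) := by
  simp [grStep, prodStep_eq_some_iff, saStep, gaStep, h, (subStep_eq_some_iff.mp h).1]

theorem fst_eq_none_of_grStep {p q : Option X × X} {a : E ⊕ E} (hp : p.1 = none)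
    (h : grStep f XS Scv p a = some q) : q.1 = none := by
  have h1 := (prodStep_eq_some_iff.mp h).1
  rw [hp] at h1
  exact (Option.some.inj h1).symm

theorem fst_eq_none_of_grStep_inl {p q : Option X × X} {e : E}
    (h : grStep f XS Scv p (Sum.inl e) = some q) (hq : q.1 = none) : p.1 = none := by
  obtain ⟨p1, p2⟩ := p
  cases p1 with
  | none => rfl
  | some x =>
    have h1 := (prodStep_eq_some_iff.mp h).1
    simp [saStep, hq] at h1

theorem fst_eq_none_of_grStep_inr {p q : Option X × X} {σ : E}
    (h : grStep f XS Scv p (Sum.inr σ) = some q) : q.1 = none := by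
  obtain ⟨p1, p2⟩ := p
  have h1 := (prodStep_eq_some_iff.mp h).1
  cases p1 with
  | none => exact (Option.some.inj h1).symm
  | some x =>
    simp only [saStep, Option.ite_none_right_eq_some] at h1
    exact (Option.some.inj h1.2).symm

theorem mem_grStates_of_step {p q : Option X × X} {a : E ⊕ E}
    (hp : p ∈ grStates f x0 XS Scv) (h : grStep f XS Scv p a = some q) :
    q ∈ grStates f x0 XS Scv := by
  obtain ⟨w, hw⟩ := hp
  exact ⟨w ++ [a], by rw [runFrom_concat, hw, Option.bind_some, h]⟩

theorem runFrom_grStep_embed {x y : X} {s : List E}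
    (h : runFrom (subStep f XS) x s = some y) :
    runFrom (grStep f XS Scv) (some x, x) (embed s) = some (some y, y) :=
  runFrom_map_of_forall_step (fun x => (some x, x)) Sum.inl (fun _ _ _ => grStep_some_inl) h

theorem exists_of_mem_detStates {x : X} (hx : x ∈ detStates f x0 XS Scv) :
    ∃ (s : List E) (σ : E) (xn : X), runFrom (subStep f XS) x0 s = some xn ∧
      grStep f XS Scv (some xn, xn) (Sum.inr σ) = some (none, x) := by
  obtain ⟨_, ⟨s, σ, rfl, -, -, hsL, hGR⟩, hx⟩ := hx
  obtain ⟨xn, hxn⟩ := Option.isSome_iff_exists.mp hsL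
  obtain ⟨p, hp⟩ := Option.isSome_iff_exists.mp hGR
  rw [runFrom_concat, runFrom_of_runFrom_subStep hxn, Option.bind_some] at hx
  rw [grInit, runFrom_concat, runFrom_grStep_embed hxn, Option.bind_some] at hp
  obtain ⟨p1, p2⟩ := p
  obtain rfl : p1 = none := fst_eq_none_of_grStep_inr hp
  obtain rfl : p2 = x := Option.some.inj ((grStep_snd hp).symm.trans hx)
  exact ⟨s, σ, xn, hxn, hp⟩

end AttackedSystem

section Recovery

variable {X E : Type*} {f : X → E → Option X} {Suc : Set E} {XR Bad : Set X}

theorem IsRecoveryPath.mono {R R' : Set X} {x : X} {r : List E}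
    (hp : IsRecoveryPath f Suc XR Bad R x r) (hR : R ⊆ R') :
    IsRecoveryPath f Suc XR Bad R' x r :=
  ⟨hp.1, hp.2.1, hp.2.2.1, fun t ht e he y hy hne => hR (hp.2.2.2 t ht e he y hy hne)⟩

theorem IsRecoveryPath.suffix {R : Set X} {x z : X} {t r : List E}
    (hp : IsRecoveryPath f Suc XR Bad R x (t ++ r)) (ht : runFrom f x t = some z) :
    IsRecoveryPath f Suc XR Bad R z r := by
  obtain ⟨⟨y, hyXR, hy⟩, hsafe, hucsafe, hdev⟩ := hp
  have hpre : ∀ {u}, u <+: r → t ++ u <+: t ++ r := (List.prefix_append_right_inj t).mpr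
  have hrun : ∀ {u}, runFrom f x (t ++ u) = runFrom f z u := by
    intro u
    rw [runFrom_append, ht, Option.bind_some]
  refine ⟨⟨y, hyXR, hrun ▸ hy⟩, fun u hu y hy => ?_, fun u hu v hv y hy => ?_,
    fun u hu e he y hy hne => ?_⟩
  · exact hsafe _ (hpre hu) y (hrun ▸ hy)
  · exact hucsafe _ (hpre hu) v hv y (by rwa [List.append_assoc, hrun])
  · refine hdev _ (hpre hu) e he y (by rwa [List.append_assoc, hrun]) ?_
    rwa [List.append_assoc, List.prefix_append_right_inj]

theorem exists_isRecoveryPath_of_mem_recSet {x : X} (hx : x ∈ recSet f Suc XR Bad) :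
    ∃ r, IsRecoveryPath f Suc XR Bad (recSet f Suc XR Bad) x r := by
  obtain ⟨R, ⟨hRBad, hRpath⟩, hxR⟩ := hx
  obtain ⟨r, hr⟩ := hRpath x hxR
  exact ⟨r, hr.mono fun y hy => ⟨R, ⟨hRBad, hRpath⟩, hy⟩⟩

/-- The states met along strategies from `recSet` themselves satisfy the defining property of
`recSet`. -/
theorem mem_recSet_of_isRecoveryPath {x z : X} {t r : List E}
    (hp : IsRecoveryPath f Suc XR Bad (recSet f Suc XR Bad) x (t ++ r))
    (ht : runFrom f x t = some z) : z ∈ recSet f Suc XR Bad := by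
  let M : Set X := {z | ∃ x t r, IsRecoveryPath f Suc XR Bad (recSet f Suc XR Bad) x (t ++ r) ∧
    runFrom f x t = some z}
  have hrecM : recSet f Suc XR Bad ⊆ M := fun y hy =>
    let ⟨r, hr⟩ := exists_isRecoveryPath_of_mem_recSet hy
    ⟨y, [], r, hr, rfl⟩
  refine ⟨M, ⟨?_, ?_⟩, x, t, r, hp, ht⟩
  · rintro y ⟨x, t, r, hp, ht⟩
    exact hp.2.1 t (List.prefix_append t r) y ht
  · rintro y ⟨x, t, r, hp, ht⟩
    exact ⟨r, (hp.suffix ht).mono hrecM⟩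

theorem mem_recSet_of_step {x y : X} {e : E} (hx : x ∈ recSet f Suc XR Bad) (he : e ∈ Suc)
    (hy : f x e = some y) : y ∈ recSet f Suc XR Bad := by
  obtain ⟨r, hp⟩ := exists_isRecoveryPath_of_mem_recSet hx
  by_cases hpre : [e] <+: r
  · obtain ⟨r', rfl⟩ := hpre
    exact mem_recSet_of_isRecoveryPath hp (by simpa using hy)
  · exact hp.2.2.2 [] List.nil_prefix e he y (by simpa using hy) (by simpa using hpre)

theorem IsRecoveryPath.exists_runFrom_subStep {x : X} {r : List E}
    (hp : IsRecoveryPath f Suc XR Bad (recSet f Suc XR Bad) x r)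
    (hx : x ∈ recSet f Suc XR Bad) :
    ∃ y ∈ XR, runFrom (subStep f (recSet f Suc XR Bad)) x r = some y := by
  induction r generalizing x with
  | nil =>
    obtain ⟨y, hyXR, hy⟩ := hp.1
    exact ⟨y, hyXR, hy⟩
  | cons e r ih =>
    obtain ⟨y, -, hy⟩ := hp.1
    obtain ⟨z, hz, -⟩ := Option.bind_eq_some_iff.mp hy
    have hzrun : runFrom f x [e] = some z := by simpa using hz
    have hzrec : z ∈ recSet f Suc XR Bad := mem_recSet_of_isRecoveryPath hp hzrun
    obtain ⟨y, hyXR, hrun⟩ := ih (hp.suffix (t := [e]) hzrun) hzrec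
    exact ⟨y, hyXR, by simp [subStep_eq_some_iff.mpr ⟨hz, hx, hzrec⟩, hrun]⟩

structure IsRecoveryClosed (f : X → E → Option X) (Suc : Set E) (XR Bad R : Set X) : Prop where
  subset_compl : R ⊆ Badᶜ
  step_mem : ∀ x ∈ R, ∀ e ∈ Suc, ∀ y, f x e = some y → y ∈ R
  exists_runFrom : ∀ x ∈ R, ∃ r, ∃ y ∈ XR, runFrom (subStep f R) x r = some y

theorem IsRecoveryClosed.subset_recSet {R : Set X} (hR : IsRecoveryClosed f Suc XR Bad R) :
    R ⊆ recSet f Suc XR Bad := by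
  refine fun _ hx => ⟨R, ⟨hR.subset_compl, fun x hx => ?_⟩, hx⟩
  obtain ⟨r, y, hyXR, hrun⟩ := hR.exists_runFrom x hx
  have hprefix : ∀ t, t <+: r → ∀ z, runFrom f x t = some z → z ∈ R := by
    rintro t ⟨u, rfl⟩ z hz
    obtain ⟨m, hm, -⟩ := runFrom_append_eq_some_iff.mp hrun
    obtain rfl : m = z := Option.some.inj ((runFrom_of_runFrom_subStep hm).symm.trans hz)
    exact mem_of_runFrom_subStep hx hm
  refine ⟨r, ⟨y, hyXR, runFrom_of_runFrom_subStep hrun⟩,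
    fun t ht z hz => hR.subset_compl (hprefix t ht z hz), fun t ht u hu z hz => ?_,
    fun t ht e he z hz _ => ?_⟩
  · obtain ⟨m, hm, hmz⟩ := runFrom_append_eq_some_iff.mp hz
    exact hR.subset_compl (mem_of_runFrom hR.step_mem hu (hprefix t ht m hm) hmz)
  · obtain ⟨m, hm, hmz⟩ := runFrom_append_eq_some_iff.mp hz
    exact hR.step_mem m (hprefix t ht m hm) e he z (by simpa using hmz)

theorem isRecoveryClosed_recSet : IsRecoveryClosed f Suc XR Bad (recSet f Suc XR Bad) where
  subset_compl := fun _ ⟨_, ⟨hRBad, _⟩, hxR⟩ => hRBad hxR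
  step_mem := fun _ hx _ he _ hy => mem_recSet_of_step hx he hy
  exists_runFrom := fun _ hx =>
    let ⟨r, hp⟩ := exists_isRecoveryPath_of_mem_recSet hx
    ⟨r, hp.exists_runFrom_subStep hx⟩

end Recovery

section Supervisors

variable {X E : Type*} {f : X → E → Option X} {x0 : X} {Suc Scv : Set E} {XUS XS XR : Set X}

def postStates (f : X → E → Option X) (x0 : X) (XS : Set X) (Scv : Set E)
    (Q : Set (Option X × X)) : Set X :=
  {x | ∃ w, runFrom (subStep (grStep f XS Scv) Q) (grInit x0) w = some (none, x)}

theorem isRecoveryClosed_postStates {Q : Set (Option X × X)}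
    (hQ : IsGRSupervisor f x0 Suc Scv XS Q) (hsafe : SafeWrtHa f x0 XS Scv XUS Q)
    (hnb : NonblockingSR f XS Scv XR Q) :
    IsRecoveryClosed f Suc XR (vulnStates f Scv ∪ XUS) (postStates f x0 XS Scv Q) := by
  have hmemQ : ∀ x ∈ postStates f x0 XS Scv Q, ((none : Option X), x) ∈ Q :=
    fun _ ⟨_, hw⟩ => mem_of_runFrom_subStep hQ.init_mem hw
  refine ⟨fun x ⟨w, hw⟩ => ?_, fun x hx e he y hy => ?_, fun x hx => ?_⟩
  · have hHa := runFrom_subStep_eq_of_mem_lang (hsafe (Option.isSome_of_eq_some hw))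
      (runFrom_of_runFrom_subStep hw)
    exact fun hbad => mem_of_runFrom_subStep (Q := haCarrier f Scv XUS)
      (by simp [grInit, haCarrier]) hHa ⟨rfl, hbad⟩
  · obtain ⟨w, hw⟩ := hx
    have hstep := grStep_none_inl (XS := XS) (Scv := Scv) |>.mpr hy
    exact ⟨w ++ [Sum.inl e], runFrom_subStep_concat hQ.init_mem hw hstep
      (hQ.controllable _ (hmemQ x ⟨w, hw⟩) e he _ hstep)⟩
  · -- a run of `Q` staying among post-attack states projects to a run of the plant
    obtain ⟨w, q, hrun, -, hqXR⟩ := hnb _ (hmemQ x hx) rfl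
    let S : Set (Option X × X) := {p | p.1 = none ∧ p.2 ∈ postStates f x0 XS Scv Q}
    have hstep : ∀ p ∈ S, ∀ a p', subStep (grStep f XS Scv) Q p a = some p' →
        p' ∈ S ∧ subStep f (postStates f x0 XS Scv Q) p.2 (Sum.elim id id a) = some p'.2 := by
      rintro ⟨p1, p2⟩ ⟨rfl, w0, hw0⟩ a ⟨p1', p2'⟩ hp
      obtain ⟨hg, -, -⟩ := subStep_eq_some_iff.mp hp
      obtain rfl : p1' = none := fst_eq_none_of_grStep rfl hg
      have hpost : p2' ∈ postStates f x0 XS Scv Q := ⟨w0 ++ [a], by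
        rw [runFrom_concat, hw0, Option.bind_some]; exact hp⟩
      exact ⟨⟨rfl, hpost⟩, subStep_eq_some_iff.mpr ⟨grStep_snd hg, ⟨w0, hw0⟩, hpost⟩⟩
    exact ⟨_, q.2, hqXR, (runFrom_map_of_step Prod.snd _ hstep ⟨rfl, hx⟩ hrun).2⟩

def recoverySup (f : X → E → Option X) (x0 : X) (XS : Set X) (Scv : Set E) (R : Set X) :
    Set (Option X × X) :=
  {p | p ∈ grStates f x0 XS Scv ∧ (p.1 = none → p.2 ∈ R)}

theorem grInit_mem_recoverySup (R : Set X) : grInit x0 ∈ recoverySup f x0 XS Scv R :=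
  ⟨⟨[], rfl⟩, fun h => absurd h (Option.some_ne_none x0)⟩

theorem isGRSupervisor_recoverySup {R : Set X}
    (hR : ∀ x ∈ R, ∀ e ∈ Suc, ∀ y, f x e = some y → y ∈ R) :
    IsGRSupervisor f x0 Suc Scv XS (recoverySup f x0 XS Scv R) where
  subset _ hp := hp.1
  init_mem := grInit_mem_recoverySup R
  controllable _ hp e he _ hq := ⟨mem_grStates_of_step hp.1 hq, fun hq1 =>
    hR _ (hp.2 (fst_eq_none_of_grStep_inl hq hq1)) e he _ (grStep_snd hq)⟩

theorem safeWrtHa_recoverySup {R : Set X} (hR : R ⊆ (vulnStates f Scv ∪ XUS)ᶜ) :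
    SafeWrtHa f x0 XS Scv XUS (recoverySup f x0 XS Scv R) :=
  lang_subStep_mono (Q' := haCarrier f Scv XUS)
    (fun _ hp hbad => hR (hp.2 hbad.1) hbad.2) _

theorem nonblockingSR_recoverySup {R : Set X}
    (hR : ∀ x ∈ R, ∃ r, ∃ y ∈ XR, runFrom (subStep f R) x r = some y) :
    NonblockingSR f XS Scv XR (recoverySup f x0 XS Scv R) := by
  rintro ⟨_, x⟩ ⟨hreach, hxR⟩ rfl
  obtain ⟨r, y, hyXR, hrun⟩ := hR x (hxR rfl)
  let S : Set X := {x | ((none : Option X), x) ∈ grStates f x0 XS Scv}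
  have hstep : ∀ x ∈ S, ∀ e y, subStep f R x e = some y →
      y ∈ S ∧ subStep (grStep f XS Scv) (recoverySup f x0 XS Scv R) (none, x) (Sum.inl e)
        = some (none, y) := by
    intro x hx e y hy
    obtain ⟨hxy, hx', hy'⟩ := subStep_eq_some_iff.mp hy
    have hg := grStep_none_inl (XS := XS) (Scv := Scv) |>.mpr hxy
    have hyS : y ∈ S := mem_grStates_of_step hx hg
    exact ⟨hyS, subStep_eq_some_iff.mpr ⟨hg, ⟨hx, fun _ => hx'⟩, ⟨hyS, fun _ => hy'⟩⟩⟩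
  exact ⟨_, _, (runFrom_map_of_step _ Sum.inl hstep hreach hrun).2, rfl, hyXR⟩

theorem runFrom_recoverySup_embed (R : Set X) {s : List E} {xn : X}
    (h : runFrom (subStep f XS) x0 s = some xn) :
    runFrom (subStep (grStep f XS Scv) (recoverySup f x0 XS Scv R)) (grInit x0) (embed s)
      = some (some xn, xn) := by
  let S : Set X := {x | ((some x : Option X), x) ∈ grStates f x0 XS Scv}
  have hstep : ∀ x ∈ S, ∀ e y, subStep f XS x e = some y →
      y ∈ S ∧ subStep (grStep f XS Scv) (recoverySup f x0 XS Scv R) (some x, x) (Sum.inl e)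
        = some (some y, y) := by
    intro x hx e y hy
    have hg := grStep_some_inl (Scv := Scv) hy
    have hyS : y ∈ S := mem_grStates_of_step hx hg
    exact ⟨hyS, subStep_eq_some_iff.mpr ⟨hg, ⟨hx, nofun⟩, ⟨hyS, nofun⟩⟩⟩
  exact (runFrom_map_of_step (fun x => (some x, x)) Sum.inl hstep ⟨[], rfl⟩ h).2

theorem MaxPermissive.runFrom_of_recoverySup {Q : Set (Option X × X)} {R : Set X}
    (hmax : MaxPermissive f x0 Suc Scv XS XUS XR Q)
    (hR : IsRecoveryClosed f Suc XR (vulnStates f Scv ∪ XUS) R) {w : List (E ⊕ E)}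
    {q : Option X × X}
    (h : runFrom (subStep (grStep f XS Scv) (recoverySup f x0 XS Scv R)) (grInit x0) w = some q) :
    runFrom (subStep (grStep f XS Scv) Q) (grInit x0) w = some q :=
  runFrom_subStep_eq_of_mem_lang
    (hmax _ (isGRSupervisor_recoverySup hR.step_mem) (safeWrtHa_recoverySup hR.subset_compl)
      (nonblockingSR_recoverySup hR.exists_runFrom) (Option.isSome_of_eq_some h))
    (runFrom_of_runFrom_subStep h)

end Supervisors

end RobustRec

theorem RobustRec.AERobustRecoverable_iff_detStates_mem_maxPermissive_general
    {X E : Type*}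
    (f : X → E → Option X) (x0 : X) (Suc Scv : Set E) (XUS XS XR : Set X)
    (Q : Set (Option X × X))
    (hQ : IsGRSupervisor f x0 Suc Scv XS Q)
    (hsafe : SafeWrtHa f x0 XS Scv XUS Q)
    (hnb : NonblockingSR f XS Scv XR Q)
    (hmax : MaxPermissive f x0 Suc Scv XS XUS XR Q) :
    AERobustRecoverable f x0 Suc Scv XUS XS XR ↔
      ∀ x ∈ detStates f x0 XS Scv, ((none : Option X), x) ∈ Q := by
  have hrecSet := isRecoveryClosed_recSet (f := f) (Suc := Suc) (XR := XR)
    (Bad := vulnStates f Scv ∪ XUS)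
  constructor
  · intro hrecov x hx
    obtain ⟨s, σ, xn, hs, hσ⟩ := exists_of_mem_detStates hx
    have hnom := runFrom_recoverySup_embed (Scv := Scv)
      (recSet f Suc XR (vulnStates f Scv ∪ XUS)) hs
    have hpre := mem_of_runFrom_subStep (grInit_mem_recoverySup _) hnom
    have hattack := runFrom_subStep_concat (grInit_mem_recoverySup _) hnom hσ
      ⟨mem_grStates_of_step hpre.1 hσ, fun _ => hrecov hx⟩
    exact mem_of_runFrom_subStep hQ.init_mem (hmax.runFrom_of_recoverySup hrecSet hattack)
  · intro hdet x hx
    obtain ⟨s, σ, xn, hs, hσ⟩ := exists_of_mem_detStates hx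
    have hnom := hmax.runFrom_of_recoverySup hrecSet (runFrom_recoverySup_embed _ hs)
    exact (isRecoveryClosed_postStates hQ hsafe hnb).subset_recSet
      ⟨_, runFrom_subStep_concat hQ.init_mem hnom hσ (hdet x hx)⟩

/-- The attacked system `Sa/Ga` is AE-robust recoverable w.r.t.
`G_robust` iff, for every detection state `x_d ∈ X_det`, the post-attack state
`(A, x_d)` belongs to the state set of the maximally permissive supervisor `S^R`
for `G^R` that is safe w.r.t. the resilient specification `Ha` and nonblocking.
Hence synthesizing `S^R` solves both the verification of AE-robust
recoverability and the synthesis of robust-recovery strategies. -/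
theorem RobustRec.AERobustRecoverable_iff_detStates_mem_maxPermissive
    {X E : Type*} [Fintype X] [Fintype E]
    (f : X → E → Option X) (x0 : X) (Sc Suc Scv : Set E) (XUS XS XR : Set X)
    (hdisj : Sc ∩ Suc = ∅) (hcover : Sc ∪ Suc = Set.univ) (hScv : Scv ⊆ Sc)
    (hS : IsSupervisor f x0 Suc XUS XS)
    (hXR : XR ∩ (vulnStates f Scv ∪ XUS) = ∅)
    (Q : Set (Option X × X))
    (hQ : IsGRSupervisor f x0 Suc Scv XS Q)
    (hsafe : SafeWrtHa f x0 XS Scv XUS Q)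
    (hnb : NonblockingSR f XS Scv XR Q)
    (hmax : MaxPermissive f x0 Suc Scv XS XUS XR Q) :
    AERobustRecoverable f x0 Suc Scv XUS XS XR ↔
      ∀ x ∈ detStates f x0 XS Scv, ((none : Option X), x) ∈ Q :=
  RobustRec.AERobustRecoverable_iff_detStates_mem_maxPermissive_general f x0 Suc Scv XUS XS XR Q hQ
    hsafe hnb hmax
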